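/- Let F be a field, let c, d ∈ F, and let (η_m), (χ_m), (ξ_m), (θ_m) be sequences of nonzero elements of F satisfying the bilinear system η_{m+1}χ_m = d·ξ_{m+1}θ_m + c·ξ_mθ_{m+1}, χ_{m+1}η_m = ξ_{m+1}θ_m + d·ξ_mθ_{m+1}, ξ_{m+2}θ_m = c·ξ_{m+1}θ_{m+1} + χ_{m+1}η_{m+1}, θ_{m+2}ξ_m = ξ_{m+1}θ_{m+1} + χ_{m+1}η_{m+1}. Define y_m = η_m·χ_m/(ξ_m·θ_m) and w_m = ξ_{m+1}·θ_m/(ξ_m·θ_{m+1}). Then for every m such that w_m(ȳ+1) ≠ 0 where ȳ = (d·w_m+c)(w_m+d)/(y_m·w_m), one has ψ̂(y_m, w_m) = (y_{m+1}, w_{m+1}), where ψ̂ is the QRT map ψ̂(u₁,u₂) = ((d·u₂+c)(u₂+d)/(u₁u₂), (ū₁+c)/(u₂(ū₁+1))) with ū₁ the first component. -/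
import Mathlib


/-- The QRT map `ψ̂(u₁,u₂) = (ū₁, ū₂)` with `ū₁ = (d·u₂+c)(u₂+d)/(u₁u₂)` and
`ū₂ = (ū₁+c)/(u₂(ū₁+1))`. -/
noncomputable def psiHat {F : Type*} [Field F] (c d : F) (u : F × F) : F × F :=
  ((d * u.2 + c) * (u.2 + d) / (u.1 * u.2),
    ((d * u.2 + c) * (u.2 + d) / (u.1 * u.2) + c) /
      (u.2 * ((d * u.2 + c) * (u.2 + d) / (u.1 * u.2) + 1)))

/-- the tau-function substitution `y_m = η_mχ_m/(ξ_mθ_m)`,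
`w_m = ξ_{m+1}θ_m/(ξ_mθ_{m+1})` turns solutions of the bilinear system into
orbits of the QRT map `ψ̂`. -/
theorem qrt_tau_function_lift {F : Type*} [Field F] (c d : F)
    (η χ ξ θ : ℕ → F)
    (hη : ∀ m, η m ≠ 0) (hχ : ∀ m, χ m ≠ 0)
    (hξ : ∀ m, ξ m ≠ 0) (hθ : ∀ m, θ m ≠ 0)
    (e₁ : ∀ m, η (m + 1) * χ m = d * (ξ (m + 1) * θ m) + c * (ξ m * θ (m + 1)))
    (e₂ : ∀ m, χ (m + 1) * η m = ξ (m + 1) * θ m + d * (ξ m * θ (m + 1)))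
    (e₃ : ∀ m, ξ (m + 2) * θ m = c * (ξ (m + 1) * θ (m + 1)) + χ (m + 1) * η (m + 1))
    (e₄ : ∀ m, θ (m + 2) * ξ m = ξ (m + 1) * θ (m + 1) + χ (m + 1) * η (m + 1))
    (y w : ℕ → F)
    (hy : ∀ m, y m = η m * χ m / (ξ m * θ m))
    (hw : ∀ m, w m = ξ (m + 1) * θ m / (ξ m * θ (m + 1))) :
    ∀ m, w m * ((d * w m + c) * (w m + d) / (y m * w m) + 1) ≠ 0 →
      psiHat c d (y m, w m) = (y (m + 1), w (m + 1)) := by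
  intro m h
  have n1 := hη m; have n2 := hη (m + 1)
  have n3 := hχ m; have n4 := hχ (m + 1)
  have n5 := hξ m; have n6 := hξ (m + 1); have n7 := hξ (m + 2)
  have n8 := hθ m; have n9 := hθ (m + 1); have n10 := hθ (m + 2)
  have hA : d * w m + c = η (m + 1) * χ m / (ξ m * θ (m + 1)) := by
    rw [hw]
    field_simp
    linear_combination -(e₁ m)
  have hB : w m + d = χ (m + 1) * η m / (ξ m * θ (m + 1)) := by
    rw [hw]
    field_simp
    linear_combination -(e₂ m)
  have key1 : (d * w m + c) * (w m + d) / (y m * w m) = y (m + 1) := by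
    rw [hA, hB, hy m, hy (m + 1), hw m]
    field_simp
  have hC : y (m + 1) + c = ξ (m + 2) * θ m / (ξ (m + 1) * θ (m + 1)) := by
    rw [hy]
    field_simp
    linear_combination -(e₃ m)
  have hD : y (m + 1) + 1 = θ (m + 2) * ξ m / (ξ (m + 1) * θ (m + 1)) := by
    rw [hy]
    field_simp
    linear_combination -(e₄ m)
  have key2 : (y (m + 1) + c) / (w m * (y (m + 1) + 1)) = w (m + 1) := by
    rw [hC, hD, hw m, hw (m + 1)]
    field_simp
  simp only [psiHat, Prod.mk.injEq]
  rw [key1]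
  exact ⟨rfl, key2⟩
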